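/- The topological product of a family of ω-balanced paratopological gyrogroups is ω-balanced. -/

import Mathlib

open Pointwise

/-- A gyrogroup: a groupoid with identity, inverses, gyroautomorphisms satisfying
the left gyroassociative law and the left loop property. -/
class Gyrogroup (G : Type*) extends Zero G, Neg G, Add G where
  zero_add : ∀ a : G, 0 + a = a
  add_zero : ∀ a : G, a + 0 = a
  neg_add_cancel : ∀ a : G, -a + a = 0
  add_neg_cancel : ∀ a : G, a + -a = 0
  gyr : G → G → G → G
  gyr_bijective : ∀ a b : G, Function.Bijective (gyr a b)
  gyr_add : ∀ a b x y : G, gyr a b (x + y) = gyr a b x + gyr a b y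
  gyrassoc : ∀ a b c : G, a + (b + c) = a + b + gyr a b c
  loop : ∀ a b : G, gyr (a + b) b = gyr a b

/-- A family γ of neighborhoods of 0 is subordinated to U if for all x, y there are
members V₁, V₂ of γ with ⊖(x⊕y)⊕((V₁⊕x)⊕y) ⊆ U and V₂ ⊆ ⊖(x⊕y)⊕((U⊕x)⊕y). -/
def Subordinated {G : Type*} [Add G] [Neg G] (γ : Set (Set G)) (U : Set G) : Prop :=
  (∀ x y : G, ∃ V ∈ γ, {-(x + y)} + ((V + {x}) + {y}) ⊆ U) ∧
  (∀ x y : G, ∃ V ∈ γ, V ⊆ {-(x + y)} + ((U + {x}) + {y}))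

/-- A paratopological gyrogroup is ω-balanced if every neighborhood of the identity
has a countable subordinated family of open neighborhoods of the identity. -/
def OmegaBalanced (G : Type*) [Add G] [Neg G] [Zero G] [TopologicalSpace G] : Prop :=
  ∀ U ∈ nhds (0 : G), ∃ γ : Set (Set G), γ.Countable ∧
    (∀ V ∈ γ, IsOpen V ∧ (0 : G) ∈ V) ∧ Subordinated γ U

/-!
A neighbourhood of the identity in the product contains a box `∏_{i ∈ I} tᵢ` with `I` finite.
Boxes built from the countable families of the finitely many factors `i ∈ I` form a countable
family, and both subordination conditions can be checked coordinatewise. For the second one the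
coordinates `i ∉ I` are unconstrained, and there one only needs the map
`u ↦ ⊖(x ⊕ y) ⊕ ((u ⊕ x) ⊕ y)` to be onto, which holds in every gyrogroup because equations
`u ⊕ a = b` are solvable.
-/

open Function

/-- In a group this is conjugation by `x + y`. -/
def gyroConj {H : Type*} [Add H] [Neg H] (x y v : H) : H :=
  -(x + y) + ((v + x) + y)

namespace Gyrogroup

variable {G : Type*} [Gyrogroup G]

theorem add_left_cancel {a u v : G} (h : a + u = a + v) : u = v := by
  have h' : -a + (a + u) = -a + (a + v) := congrArg (-a + ·) h
  rw [gyrassoc (-a) a u, gyrassoc (-a) a v, Gyrogroup.neg_add_cancel, Gyrogroup.zero_add,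
    Gyrogroup.zero_add] at h'
  exact (gyr_bijective (-a) a).1 h'

theorem gyr_zero_left (b c : G) : gyr 0 b c = c := by
  have h := gyrassoc (0 : G) b c
  rw [Gyrogroup.zero_add, Gyrogroup.zero_add] at h
  exact (add_left_cancel h).symm

theorem gyr_neg_self (a c : G) : gyr (-a) a c = c := by
  rw [← loop (-a) a, Gyrogroup.neg_add_cancel, gyr_zero_left]

theorem neg_add_cancel_left (a b : G) : -a + (a + b) = b := by
  rw [gyrassoc (-a) a b, Gyrogroup.neg_add_cancel, Gyrogroup.zero_add, gyr_neg_self]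

theorem gyr_neg_add_gyr (a b x : G) : gyr (-a) (a + b) (gyr a b x) = x := by
  have h : b + x = -a + (a + (b + x)) := (Gyrogroup.neg_add_cancel_left _ _).symm
  rw [gyrassoc a b x, gyrassoc (-a) (a + b) _, Gyrogroup.neg_add_cancel_left] at h
  exact (add_left_cancel h).symm

theorem gyr_add_left_gyr (a b c : G) : gyr a (b + a) (gyr b a c) = c := by
  nth_rewrite 1 [← Gyrogroup.neg_add_cancel_left b a]
  rw [loop]
  exact gyr_neg_add_gyr b a c

theorem exists_add_eq (p q : G) : ∃ x : G, x + p = q := by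
  refine ⟨-p + ((p + q) + -p), ?_⟩
  have key : -p + ((p + q) + (-p + p)) = (-p + ((p + q) + -p)) + p := by
    rw [gyrassoc (p + q) (-p) p, gyrassoc (-p) ((p + q) + -p) _, gyr_add_left_gyr]
  rw [Gyrogroup.neg_add_cancel, Gyrogroup.add_zero, Gyrogroup.neg_add_cancel_left] at key
  exact key.symm

theorem gyroConj_surjective (x y : G) : Surjective (gyroConj x y) := by
  intro c
  obtain ⟨w, hw⟩ := exists_add_eq y ((x + y) + c)
  obtain ⟨u, hu⟩ := exists_add_eq x w
  exact ⟨u, by rw [gyroConj, hu, hw, Gyrogroup.neg_add_cancel_left]⟩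

end Gyrogroup

section Subordinated

variable {H : Type*} [Add H] [Neg H]

theorem singleton_add_add_singleton_add_singleton (x y : H) (V : Set H) :
    ({-(x + y)} : Set H) + ((V + {x}) + {y}) = gyroConj x y '' V := by
  simp only [Set.singleton_add, Set.add_singleton, Set.image_image]
  rfl

theorem subordinated_iff_image {γ : Set (Set H)} {U : Set H} :
    Subordinated γ U ↔ (∀ x y : H, ∃ V ∈ γ, gyroConj x y '' V ⊆ U) ∧
      (∀ x y : H, ∃ V ∈ γ, V ⊆ gyroConj x y '' U) := by
  simp only [Subordinated, singleton_add_add_singleton_add_singleton]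

theorem Subordinated.mono {γ : Set (Set H)} {U U' : Set H} (h : Subordinated γ U)
    (hUU' : U ⊆ U') : Subordinated γ U' := by
  rw [subordinated_iff_image] at h ⊢
  refine ⟨fun x y => ?_, fun x y => ?_⟩
  · obtain ⟨V, hV, hVU⟩ := h.1 x y
    exact ⟨V, hV, hVU.trans hUU'⟩
  · obtain ⟨V, hV, hVU⟩ := h.2 x y
    exact ⟨V, hV, hVU.trans (Set.image_mono hUU')⟩

end Subordinated

section Pi

variable {ι : Type*} {G : ι → Type*}

/-- The boxes `∏_{i ∈ I} Vᵢ` with `Vᵢ ∈ γ i`. -/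
def boxFamily (I : Set ι) (γ : ∀ i, Set (Set (G i))) : Set (Set (∀ i, G i)) :=
  Set.range fun V : ∀ i : I, γ i => ⋂ i : I, eval (i : ι) ⁻¹' (V i : Set (G i))

theorem boxFamily_countable {I : Set ι} (hI : I.Finite) {γ : ∀ i, Set (Set (G i))}
    (hγ : ∀ i, (γ i).Countable) : (boxFamily I γ).Countable := by
  have : Finite I := hI.to_subtype
  have : ∀ i, Countable (γ i) := fun i => (hγ i).to_subtype
  exact Set.countable_range _

theorem isOpen_and_zero_mem_of_mem_boxFamily [∀ i, TopologicalSpace (G i)] [∀ i, Zero (G i)]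
    {I : Set ι} (hI : I.Finite) {γ : ∀ i, Set (Set (G i))}
    (hγ : ∀ i, ∀ V ∈ γ i, IsOpen V ∧ (0 : G i) ∈ V) {W : Set (∀ i, G i)}
    (hW : W ∈ boxFamily I γ) : IsOpen W ∧ (0 : ∀ i, G i) ∈ W := by
  have : Finite I := hI.to_subtype
  obtain ⟨V, rfl⟩ := hW
  refine ⟨isOpen_iInter_of_finite fun i => ?_, Set.mem_iInter.2 fun i => (hγ i _ (V i).2).2⟩
  exact (hγ i _ (V i).2).1.preimage (continuous_apply (i : ι))

theorem Subordinated.pi [∀ i, Gyrogroup (G i)] {I : Set ι} {γ : ∀ i, Set (Set (G i))}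
    {t : ∀ i, Set (G i)} (hγ : ∀ i, Subordinated (γ i) (t i)) :
    Subordinated (boxFamily I γ) (I.pi t) := by
  simp only [subordinated_iff_image] at hγ ⊢
  refine ⟨fun x y => ?_, fun x y => ?_⟩
  · choose V hVγ hVt using fun i => (hγ i).1 (x i) (y i)
    refine ⟨_, ⟨fun i => ⟨V i, hVγ i⟩, rfl⟩, ?_⟩
    rintro _ ⟨v, hv, rfl⟩ i hi
    exact hVt i ⟨v i, Set.mem_iInter.1 hv ⟨i, hi⟩, rfl⟩
  · choose V hVγ hVt using fun i => (hγ i).2 (x i) (y i)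
    refine ⟨_, ⟨fun i => ⟨V i, hVγ i⟩, rfl⟩, fun v hv => ?_⟩
    have hcoord : ∀ i, ∃ u, (i ∈ I → u ∈ t i) ∧ gyroConj (x i) (y i) u = v i := by
      intro i
      by_cases hi : i ∈ I
      · obtain ⟨u, hu, huv⟩ := hVt i (Set.mem_iInter.1 hv ⟨i, hi⟩)
        exact ⟨u, fun _ => hu, huv⟩
      · obtain ⟨u, huv⟩ := Gyrogroup.gyroConj_surjective (x i) (y i) (v i)
        exact ⟨u, (absurd · hi), huv⟩
    choose u hut huv using hcoord
    exact ⟨u, hut, funext huv⟩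

end Pi

theorem omegaBalanced_pi_general {ι : Type*} {G : ι → Type*} [∀ i, Gyrogroup (G i)]
    [∀ i, TopologicalSpace (G i)]
    (h : ∀ i, OmegaBalanced (G i)) : OmegaBalanced (∀ i, G i) := by
  intro U hU
  rw [nhds_pi, Filter.mem_pi] at hU
  obtain ⟨I, hI, t, ht, htU⟩ := hU
  choose γ hγc hγopen hγsub using fun i => h i (t i) (ht i)
  exact ⟨boxFamily I γ, boxFamily_countable hI hγc,
    fun _ hW => isOpen_and_zero_mem_of_mem_boxFamily hI hγopen hW, (Subordinated.pi hγsub).mono htU⟩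

/-- The topological product of a family of ω-balanced paratopological gyrogroups is
ω-balanced. -/
theorem omegaBalanced_pi {ι : Type*} {G : ι → Type*} [∀ i, Gyrogroup (G i)]
    [∀ i, TopologicalSpace (G i)] [∀ i, ContinuousAdd (G i)]
    (h : ∀ i, OmegaBalanced (G i)) : OmegaBalanced (∀ i, G i) :=
  omegaBalanced_pi_general h
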